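/- arXiv:1705.00807 — 2 statements merged into one kernel-verified Lean document; each statement's English description precedes it below -/
import Mathlib

section
/- Let n be a positive integer, q ∈ [0,1], and let q̂ = X/n where X ~ Poisson(nq). Then: (i) if 0 ≤ q ≤ 1/n, E|q̂ − q| = 2q e^{−nq}; (ii) if q ≥ 1/n, √(q/(2n)) ≤ E|q̂ − q| ≤ √(q/n); consequently, for all q ∈ [0,1], (1/√2)·min{q, √(q/n)} ≤ E|q̂ − q| ≤ 2·min{q, √(q/n)}. -/
/-!
With `lam = n q` the quantity is `E |X - lam| / n` for `X ~ Poisson(lam)`, and this mean absolute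
deviation has the closed form `2 lam P(X = ⌊lam⌋)`: write `|k - lam| = (k - lam) + 2 (lam - k)⁺`;
the first part has mean zero and the second is a finite sum that telescopes, because
`k P(X = k) = lam P(X = k - 1)`. For `lam ≤ 1` this is `2 lam e^{-lam}`. For `lam ≥ 1` the upper
bound is `(E |X - lam|)² ≤ Var X = lam`, and the lower bound `√(lam / 2)` amounts to
`m! ≤ 2√2 lam^(m + 1/2) e^{-lam}` for `m = ⌊lam⌋`. The right side is log-concave in `lam`, so it
suffices to check `lam = m` and `lam = m + 1`, where it follows from Stirling's bound
`k! ≤ e √k (k / e)^k` and `e ≤ 2√2`.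
-/

open scoped BigOperators

/-- The Poisson(lam) probability mass function on the nonnegative integers. -/
noncomputable def poissonPMF (lam : ℝ) (k : ℕ) : ℝ :=
  Real.exp (-lam) * lam ^ k / (Nat.factorial k)

/-- Expectation of `f` under the Poisson(lam) distribution. -/
noncomputable def poissonE (lam : ℝ) (f : ℕ → ℝ) : ℝ :=
  ∑' k : ℕ, poissonPMF lam k * f k

open Real Finset
open scoped Nat

lemma le_sqrt_of_hasSum_mul_abs {ι : Type*} {p y : ι → ℝ} {a v : ℝ} (hp : ∀ i, 0 ≤ p i)
    (h_one : HasSum p 1) (ha : HasSum (fun i => p i * |y i|) a)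
    (hv : HasSum (fun i => p i * y i ^ 2) v) : a ≤ √v := by
  have h_expand : (fun i => p i * (|y i| - a) ^ 2) =
      fun i => p i * y i ^ 2 - 2 * a * (p i * |y i|) + a ^ 2 * p i := by
    ext i; rw [← sq_abs (y i)]; ring
  have h_var : HasSum (fun i => p i * (|y i| - a) ^ 2) (v - 2 * a * a + a ^ 2 * 1) := by
    rw [h_expand]; exact (hv.sub (ha.mul_left (2 * a))).add (h_one.mul_left (a ^ 2))
  have : 0 ≤ v - 2 * a * a + a ^ 2 * 1 := h_var.nonneg fun i => mul_nonneg (hp i) (sq_nonneg _)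
  exact (le_abs_self a).trans (abs_le_sqrt (by linarith))

lemma factorial_le_exp_one_mul_rpow_mul_exp_neg {n : ℕ} (hn : n ≠ 0) :
    (n ! : ℝ) ≤ exp 1 * (n : ℝ) ^ ((n : ℝ) + 1 / 2) * exp (-n) := by
  have h_seq : Stirling.stirlingSeq n ≤ exp 1 / √2 := by
    obtain ⟨k, rfl⟩ := Nat.exists_eq_succ_of_ne_zero hn
    simpa [Stirling.stirlingSeq_one] using Stirling.stirlingSeq'_antitone (Nat.zero_le k)
  have hn' : (0 : ℝ) < n := by positivity
  rw [Stirling.stirlingSeq, div_le_iff₀ (by positivity)] at h_seq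
  refine h_seq.trans_eq ?_
  rw [rpow_add hn', rpow_natCast, ← sqrt_eq_rpow, sqrt_mul zero_le_two, div_pow, exp_neg,
    ← exp_one_pow]
  field_simp

lemma factorial_le_exp_one_mul_succ_rpow_mul_exp_neg (n : ℕ) :
    (n ! : ℝ) ≤ exp 1 * ((n : ℝ) + 1) ^ ((n : ℝ) + 1 / 2) * exp (-(n + 1)) := by
  have h := factorial_le_exp_one_mul_rpow_mul_exp_neg n.succ_ne_zero
  rw [Nat.factorial_succ, show ((n.succ : ℕ) : ℝ) + 1 / 2 = ((n : ℝ) + 1 / 2) + 1 by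
    push_cast; ring, rpow_add_one (by positivity)] at h
  push_cast at h
  nlinarith [show (0 : ℝ) < n + 1 by positivity]

lemma min_le_rpow_mul_exp_neg {a b c x : ℝ} (hc : 0 ≤ c) (ha : 0 < a) (hx : x ∈ Set.Icc a b) :
    min (a ^ c * exp (-a)) (b ^ c * exp (-b)) ≤ x ^ c * exp (-x) := by
  have h_concave : ConcaveOn ℝ (Set.Ioi 0) (c • log - id : ℝ → ℝ) :=
    (strictConcaveOn_log_Ioi.concaveOn.smul hc).sub (convexOn_id (convex_Ioi 0))
  have h_exp : ∀ t, 0 < t → t ^ c * exp (-t) = exp ((c • log - id : ℝ → ℝ) t) := fun t ht => by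
    rw [rpow_def_of_pos ht, ← exp_add, mul_comm]; rfl
  have hb : 0 < b := ha.trans_le (hx.1.trans hx.2)
  rw [h_exp a ha, h_exp b hb, h_exp x (ha.trans_le hx.1), ← exp_monotone.map_min]
  exact exp_monotone (h_concave.min_le_of_mem_Icc ha hb hx)

lemma exp_one_le_two_mul_sqrt_two : exp 1 ≤ 2 * √2 := by
  have : (1.4 : ℝ) ≤ √2 := le_sqrt_of_sq_le (by norm_num)
  linarith [exp_one_lt_d9]

lemma factorial_le_two_mul_sqrt_two_mul_pow_mul_sqrt_mul_exp_neg {m : ℕ} (hm : m ≠ 0) {x : ℝ}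
    (hx : x ∈ Set.Icc (m : ℝ) (m + 1)) : (m ! : ℝ) ≤ 2 * √2 * (x ^ m * √x * exp (-x)) := by
  have hm' : (0 : ℝ) < m := by positivity
  have hx0 : 0 < x := hm'.trans_le hx.1
  have h_min := min_le_rpow_mul_exp_neg (by positivity : (0 : ℝ) ≤ m + 1 / 2) hm' hx
  have h_fact : (m ! : ℝ) ≤ exp 1 * (x ^ ((m : ℝ) + 1 / 2) * exp (-x)) := by
    refine le_trans ?_ (mul_le_mul_of_nonneg_left h_min (exp_pos 1).le)
    rw [mul_min_of_nonneg _ _ (exp_pos 1).le, le_min_iff, ← mul_assoc, ← mul_assoc]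
    exact ⟨factorial_le_exp_one_mul_rpow_mul_exp_neg hm,
      factorial_le_exp_one_mul_succ_rpow_mul_exp_neg m⟩
  rw [rpow_add hx0, rpow_natCast, ← sqrt_eq_rpow] at h_fact
  exact h_fact.trans (mul_le_mul_of_nonneg_right exp_one_le_two_mul_sqrt_two (by positivity))

section PoissonMoments

variable (lam : ℝ)

lemma hasSum_poissonPMF : HasSum (poissonPMF lam) 1 := by
  have h := (NormedSpace.expSeries_div_hasSum_exp lam).mul_left (exp (-lam))
  rw [← exp_eq_exp_ℝ, ← exp_add, neg_add_cancel, exp_zero] at h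
  have h_eq : poissonPMF lam = fun k => exp (-lam) * (lam ^ k / k !) := by
    ext k; rw [poissonPMF, mul_div_assoc]
  rwa [h_eq]

lemma poissonPMF_succ_mul (k : ℕ) :
    poissonPMF lam (k + 1) * (k + 1) = lam * poissonPMF lam k := by
  simp only [poissonPMF, Nat.factorial_succ]
  push_cast
  field_simp
  ring

lemma HasSum.poissonPMF_mul_natCast {f : ℕ → ℝ} {a : ℝ}
    (h : HasSum (fun k => poissonPMF lam k * f k) a) :
    HasSum (fun k => poissonPMF lam k * (k * f (k - 1))) (lam * a) := by
  rw [← hasSum_nat_add_iff' 1]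
  simpa [← mul_assoc, poissonPMF_succ_mul] using h.mul_left lam

lemma hasSum_poissonPMF_mul_natCast :
    HasSum (fun k => poissonPMF lam k * k) lam := by
  simpa using ((hasSum_poissonPMF lam).mul_right 1).poissonPMF_mul_natCast

lemma hasSum_poissonPMF_mul_natCast_mul_natCast_sub_one :
    HasSum (fun k => poissonPMF lam k * (k * (k - 1))) (lam ^ 2) := by
  convert (hasSum_poissonPMF_mul_natCast lam).poissonPMF_mul_natCast using 1
  · ext (_ | k) <;> simp
  · ring

lemma hasSum_poissonPMF_mul_sq_sub :
    HasSum (fun k => poissonPMF lam k * ((k : ℝ) - lam) ^ 2) lam := by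
  convert (hasSum_poissonPMF_mul_natCast_mul_natCast_sub_one lam).add
    (((hasSum_poissonPMF_mul_natCast lam).mul_left (1 - 2 * lam)).add
      ((hasSum_poissonPMF lam).mul_left (lam ^ 2))) using 1
  · ext k; ring
  · ring

lemma sum_range_succ_poissonPMF_mul_sub (M : ℕ) :
    ∑ k ∈ range (M + 1), poissonPMF lam k * (lam - k) = lam * poissonPMF lam M := by
  induction M with
  | zero => simp [poissonPMF, mul_comm]
  | succ M ih =>
    rw [sum_range_succ, ih, Nat.cast_succ, mul_sub, poissonPMF_succ_mul]
    ring

end PoissonMoments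

noncomputable def poissonMAD (lam : ℝ) : ℝ := 2 * lam * poissonPMF lam ⌊lam⌋₊

section PoissonMAD

variable {lam : ℝ}

lemma poissonPMF_nonneg (h : 0 ≤ lam) (k : ℕ) : 0 ≤ poissonPMF lam k := by
  unfold poissonPMF; positivity

lemma hasSum_poissonPMF_mul_abs_sub (h : 0 ≤ lam) :
    HasSum (fun k => poissonPMF lam k * |(k : ℝ) - lam|) (poissonMAD lam) := by
  set g : ℕ → ℝ := fun k => poissonPMF lam k * max (lam - k) 0
  have h_centered : HasSum (fun k => poissonPMF lam k * ((k : ℝ) - lam)) 0 := by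
    simpa [mul_sub, mul_comm _ lam] using
      (hasSum_poissonPMF_mul_natCast lam).sub ((hasSum_poissonPMF lam).mul_left lam)
  have h_support : ∀ k ∉ range (⌊lam⌋₊ + 1), g k = 0 := by
    intro k hk
    have : lam < k := Nat.lt_of_floor_lt (by simpa using hk)
    simp [g, this.le]
  have h_neg : HasSum g (lam * poissonPMF lam ⌊lam⌋₊) := by
    convert (hasSum_sum_of_ne_finset_zero h_support : HasSum g _) using 1
    rw [← sum_range_succ_poissonPMF_mul_sub]
    refine sum_congr rfl fun k hk => ?_
    have : (k : ℝ) ≤ lam := (Nat.cast_le.2 (Nat.lt_succ_iff.1 (mem_range.1 hk))).trans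
      (Nat.floor_le h)
    simp [g, this]
  convert h_centered.add (h_neg.mul_left 2) using 1
  · ext k
    rcases le_total lam k with hk | hk
    · simp [g, abs_of_nonneg (sub_nonneg.2 hk), hk]
    · simp [g, abs_of_nonpos (sub_nonpos.2 hk), hk]; ring
  · rw [poissonMAD]; ring

lemma poissonMAD_of_le_one (h1 : lam ≤ 1) :
    poissonMAD lam = 2 * lam * exp (-lam) := by
  rcases h1.lt_or_eq with h1 | rfl
  · simp [poissonMAD, poissonPMF, Nat.floor_eq_zero.2 h1]
  · simp [poissonMAD, poissonPMF]

lemma sqrt_half_le_poissonMAD (h : 1 ≤ lam) : √(lam / 2) ≤ poissonMAD lam := by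
  set m := ⌊lam⌋₊
  have hm : m ≠ 0 := (Nat.floor_pos.2 h).ne'
  have h_fact := factorial_le_two_mul_sqrt_two_mul_pow_mul_sqrt_mul_exp_neg hm
    ⟨Nat.floor_le (by linarith), (Nat.lt_floor_add_one lam).le⟩
  have h_pos : (0 : ℝ) < m ! := by positivity
  rw [poissonMAD, poissonPMF, mul_div_assoc', le_div_iff₀ h_pos]
  calc √(lam / 2) * m ! ≤ √(lam / 2) * (2 * √2 * (lam ^ m * √lam * exp (-lam))) :=
        mul_le_mul_of_nonneg_left h_fact (sqrt_nonneg _)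
    _ = 2 * lam * (exp (-lam) * lam ^ m) := by
        rw [sqrt_div' _ zero_le_two]
        field_simp
        exact sq_sqrt (by linarith)

lemma poissonMAD_le_sqrt (h : 0 ≤ lam) : poissonMAD lam ≤ √lam :=
  le_sqrt_of_hasSum_mul_abs (poissonPMF_nonneg h) (hasSum_poissonPMF lam)
    (hasSum_poissonPMF_mul_abs_sub h) (hasSum_poissonPMF_mul_sq_sub lam)

lemma inv_sqrt_two_mul_min_le_poissonMAD (h : 0 ≤ lam) :
    1 / √2 * min lam √lam ≤ poissonMAD lam := by
  rcases le_total lam 1 with h1 | h1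
  · rw [min_eq_left (le_sqrt_self_iff.2 h1), poissonMAD_of_le_one h1]
    have h_const : 1 / √2 ≤ 2 * exp (-1) := by
      rw [exp_neg, ← div_eq_mul_inv, div_le_div_iff₀ (by positivity) (exp_pos 1)]
      simpa using exp_one_le_two_mul_sqrt_two
    have h_exp : exp (-1) ≤ exp (-lam) := exp_le_exp.2 (by linarith)
    nlinarith
  · calc 1 / √2 * min lam √lam = √(lam / 2) := by
          rw [min_eq_right (sqrt_le_self_iff.2 (Or.inr h1)), sqrt_div' _ zero_le_two]; ring
      _ ≤ poissonMAD lam := sqrt_half_le_poissonMAD h1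

lemma poissonMAD_le_two_mul_min (h : 0 ≤ lam) :
    poissonMAD lam ≤ 2 * min lam √lam := by
  rcases le_total lam 1 with h1 | h1
  · rw [min_eq_left (le_sqrt_self_iff.2 h1), poissonMAD_of_le_one h1]
    nlinarith [exp_le_one_iff.2 (neg_nonpos.2 h)]
  · rw [min_eq_right (sqrt_le_self_iff.2 (Or.inr h1))]
    linarith [poissonMAD_le_sqrt h, sqrt_nonneg lam]

end PoissonMAD

lemma poissonE_abs_div_sub_div {c : ℝ} (hc : 0 ≤ c) (lam : ℝ) :
    poissonE lam (fun k => |(k : ℝ) / c - lam / c|) =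
      (∑' k, poissonPMF lam k * |(k : ℝ) - lam|) / c := by
  rw [poissonE, ← tsum_div_const]
  congr 1 with k
  rw [← sub_div, abs_div, abs_of_nonneg hc, mul_div_assoc]

/-- sharp bounds on `E |q̂ - q|` for `q̂ = X/n`, `X ~ Poisson(nq)`. -/
theorem poisson_mle_bias (n : ℕ) (hn : 0 < n) (q : ℝ) (hq : q ∈ Set.Icc (0 : ℝ) 1) :
    (q ≤ 1 / n →
      poissonE (n * q) (fun k => |(k : ℝ) / n - q|) = 2 * q * Real.exp (-(n * q))) ∧
    (1 / n ≤ q →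
      Real.sqrt (q / (2 * n)) ≤ poissonE (n * q) (fun k => |(k : ℝ) / n - q|) ∧
      poissonE (n * q) (fun k => |(k : ℝ) / n - q|) ≤ Real.sqrt (q / n)) ∧
    (1 / Real.sqrt 2) * min q (Real.sqrt (q / n)) ≤
      poissonE (n * q) (fun k => |(k : ℝ) / n - q|) ∧
    poissonE (n * q) (fun k => |(k : ℝ) / n - q|) ≤ 2 * min q (Real.sqrt (q / n)) := by
  have hn' : (0 : ℝ) < n := by exact_mod_cast hn
  obtain ⟨lam, hlam, rfl⟩ : ∃ lam, 0 ≤ lam ∧ q = lam / n :=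
    ⟨n * q, mul_nonneg hn'.le hq.1, by field_simp⟩
  have hE : poissonE lam (fun k => |(k : ℝ) / n - lam / n|) = poissonMAD lam / n := by
    rw [poissonE_abs_div_sub_div hn'.le, (hasSum_poissonPMF_mul_abs_sub hlam).tsum_eq]
  have h_sqrt (x : ℝ) : √(x / n / n) = √x / n := by
    rw [div_div, sqrt_div' _ (by positivity), sqrt_mul_self hn'.le]
  rw [mul_div_cancel₀ _ hn'.ne', hE, show lam / n / (2 * n) = lam / 2 / n / n by ring, h_sqrt,
    h_sqrt, min_div_div_right hn'.le]
  simp only [← mul_div_assoc, div_le_div_iff_of_pos_right hn']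
  refine ⟨fun h => ?_, fun h => ⟨sqrt_half_le_poissonMAD h, poissonMAD_le_sqrt hlam⟩,
    inv_sqrt_two_mul_min_le_poissonMAD hlam, poissonMAD_le_two_mul_min hlam⟩
  rw [poissonMAD_of_le_one h]
  ring
end

section
/- For every constant A > 0 there exists a constant C > 0 such that the following holds for every integer K ≥ 1. If Q is a real polynomial of degree at most K that is an even function, satisfies Q(0) = 0, and satisfies max_{t∈[−1,1]} |Q(t) − |t|| ≤ A/K, then for all t ∈ [−1,1]: | |t| − |Q(t) − |t|| | ≤ C·K·t². -/
/-!
Where `|t| ≥ 1/(2K)` the bound is immediate: `|Q t| ≤ |t| + A/K ≤ (2 + 4A) K t²`.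
Writing the even polynomial `Q` with `Q 0 = 0` as `t² H(t²)` with `deg H ≤ K`, this says
`|H| ≤ (2 + 4A) K` on `[1/(4K²), 1]`. Chebyshev's extremal property then bounds `H` on the short
interval `[0, 1/(4K²)]` by the same constant times `T_K(1 + O(1/K²)) ≤ e`, which gives
`|Q t| ≤ e (2 + 4A) K t²` near the origin as well. Finally `| |t| - |Q t - |t|| | ≤ |Q t|`.
-/

open Polynomial Real

namespace Polynomial

variable {R : Type*} [CommRing R]

theorem coeff_eq_zero_of_comp_neg_X_eq [NoZeroDivisors R] [CharZero R] {Q : R[X]}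
    (hQ : Q.comp (-X) = Q) {n : ℕ} (hn : Odd n) : Q.coeff n = 0 := by
  have h := congrArg (coeff · n) hQ
  simp only [← C_1, ← C_neg, ← neg_one_mul (X : R[X]), comp_C_mul_X_coeff, hn.neg_one_pow,
    mul_neg_one] at h
  exact CharZero.neg_eq_self_iff.mp h

theorem expand_two_contract_of_comp_neg_X_eq [NoZeroDivisors R] [CharZero R] {Q : R[X]}
    (hQ : Q.comp (-X) = Q) : expand R 2 (contract 2 Q) = Q := by
  ext n
  rw [coeff_expand two_pos, coeff_contract two_ne_zero]
  split_ifs with h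
  · rw [Nat.div_mul_cancel h]
  · exact (coeff_eq_zero_of_comp_neg_X_eq hQ (Nat.odd_iff.mpr (by omega))).symm

theorem natDegree_contract_le (p : ℕ) (Q : R[X]) : (contract p Q).natDegree ≤ Q.natDegree :=
  natDegree_sum_le_of_forall_le _ _ fun _ hn =>
    (natDegree_monomial_le _).trans (Nat.lt_succ_iff.mp (Finset.mem_range.mp hn))

theorem exists_eval_eq_sq_mul_eval_sq [IsDomain R] [Infinite R] [CharZero R] {Q : R[X]}
    (heven : ∀ t, Q.eval (-t) = Q.eval t) (h0 : Q.eval 0 = 0) :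
    ∃ H : R[X], H.natDegree ≤ Q.natDegree ∧ ∀ t, Q.eval t = t ^ 2 * H.eval (t ^ 2) := by
  have hQ : Q.comp (-X) = Q := Polynomial.funext fun t => by simp [heven]
  have hP0 : (contract 2 Q).coeff 0 = 0 := by
    rw [coeff_contract two_ne_zero, zero_mul, coeff_zero_eq_eval_zero, h0]
  refine ⟨(contract 2 Q).divX, natDegree_divX_le.trans (natDegree_contract_le 2 Q), fun t => ?_⟩
  calc Q.eval t = (contract 2 Q).eval (t ^ 2) := by
        rw [← expand_eval, expand_two_contract_of_comp_neg_X_eq hQ]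
    _ = t ^ 2 * (contract 2 Q).divX.eval (t ^ 2) := by
        conv_lhs => rw [← divX_mul_X_add (contract 2 Q), hP0]
        simp [mul_comm]

end Polynomial

theorem Real.sq_div_two_le_cosh_sub_one (θ : ℝ) : θ ^ 2 / 2 ≤ cosh θ - 1 := by
  have hsinh : |θ| / 2 ≤ sinh (|θ| / 2) := self_le_sinh_iff.mpr (by positivity)
  have hcosh : cosh |θ| = 1 + 2 * sinh (|θ| / 2) ^ 2 := by
    conv_lhs => rw [← mul_div_cancel₀ |θ| two_ne_zero, cosh_two_mul, cosh_sq]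
    ring
  rw [← cosh_abs, hcosh, ← sq_abs θ]
  nlinarith [abs_nonneg θ]

namespace Polynomial.Chebyshev

theorem eval_T_real_le_exp (n : ℕ) {x : ℝ} (hx : 1 ≤ x) :
    (T ℝ n).eval x ≤ exp (n ^ 2 * (x - 1)) := by
  rw [← cosh_arcosh hx, T_real_cosh]
  calc cosh ((n : ℤ) * arcosh x) ≤ exp (((n : ℤ) * arcosh x) ^ 2 / 2) := cosh_le_exp_half_sq _
    _ = exp (n ^ 2 * (arcosh x ^ 2 / 2)) := by push_cast; ring_nf
    _ ≤ exp (n ^ 2 * (cosh (arcosh x) - 1)) := by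
        gcongr; exact sq_div_two_le_cosh_sub_one _

theorem abs_eval_le_mul_eval_T {n : ℕ} {P : ℝ[X]} {M x : ℝ} (hM : 0 < M) (hx : 1 ≤ x)
    (hP : P.natDegree ≤ n) (hPbnd : ∀ y ∈ Set.Icc (-1) 1, |P.eval y| ≤ M) :
    |P.eval x| ≤ M * (T ℝ n).eval x := by
  have eval_le_T : ∀ P' : ℝ[X], P'.natDegree ≤ n → (∀ y ∈ Set.Icc (-1) 1, |P'.eval y| ≤ 1) →
      P'.eval x ≤ (T ℝ n).eval x := fun P' hdeg hbnd => by
    simpa using eval_iterate_derivative_le_of_forall_abs_le_one (k := 0) hx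
      (degree_le_of_natDegree_le hdeg) hbnd
  have hdeg : (Polynomial.C M⁻¹ * P).natDegree ≤ n := (natDegree_C_mul_le _ _).trans hP
  have hbnd : ∀ y ∈ Set.Icc (-1) 1, |(Polynomial.C M⁻¹ * P).eval y| ≤ 1 := fun y hy => by
    rw [eval_mul, eval_C, abs_mul, abs_inv, abs_of_pos hM, inv_mul_le_one₀ hM]
    exact hPbnd y hy
  have h₁ := eval_le_T _ hdeg hbnd
  have h₂ := eval_le_T (-(Polynomial.C M⁻¹ * P)) (by rwa [natDegree_neg]) (by simpa using hbnd)
  simp only [eval_mul, eval_C, eval_neg] at h₁ h₂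
  calc |P.eval x| = M * |M⁻¹ * P.eval x| := by
        rw [abs_mul, abs_inv, abs_of_pos hM, mul_inv_cancel_left₀ hM.ne']
    _ ≤ M * (T ℝ n).eval x := by gcongr; exact abs_le.mpr ⟨by linarith, h₁⟩

theorem abs_eval_le_mul_eval_T_of_le {n : ℕ} {P : ℝ[X]} {a b M x : ℝ} (hab : a < b) (hM : 0 < M)
    (hP : P.natDegree ≤ n) (hPbnd : ∀ y ∈ Set.Icc a b, |P.eval y| ≤ M) (hx : x ≤ a) :
    |P.eval x| ≤ M * (T ℝ n).eval ((a + b - 2 * x) / (b - a)) := by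
  have hba : 0 < b - a := sub_pos.mpr hab
  set L : ℝ[X] := Polynomial.C ((a + b) / 2) - Polynomial.C ((b - a) / 2) * X
  have hL : ∀ s, L.eval s = (a + b) / 2 - (b - a) / 2 * s := fun s => by simp [L]
  have hdeg : (P.comp L).natDegree ≤ n := by
    refine natDegree_comp_le.trans ?_
    have : L.natDegree ≤ 1 := by simp only [L]; compute_degree
    nlinarith
  have hbnd : ∀ s ∈ Set.Icc (-1) 1, |(P.comp L).eval s| ≤ M := fun s ⟨hs₁, hs₂⟩ => by
    rw [eval_comp, hL]
    exact hPbnd _ ⟨by nlinarith, by nlinarith⟩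
  have hone : 1 ≤ (a + b - 2 * x) / (b - a) := by rw [one_le_div hba]; linarith
  have hx' : (P.comp L).eval ((a + b - 2 * x) / (b - a)) = P.eval x := by
    rw [eval_comp, hL]; congr 1; field_simp; ring
  rw [← hx']
  exact abs_eval_le_mul_eval_T hM hone hdeg hbnd

theorem abs_eval_le_mul_exp_one {n : ℕ} (hn : 1 ≤ n) {P : ℝ[X]} {M x : ℝ} (hM : 0 < M)
    (hP : P.natDegree ≤ n) (hPbnd : ∀ y ∈ Set.Icc ((2 * n : ℝ)⁻¹ ^ 2) 1, |P.eval y| ≤ M)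
    (hx₀ : 0 ≤ x) (hx : x ≤ (2 * n : ℝ)⁻¹ ^ 2) :
    |P.eval x| ≤ M * exp 1 := by
  set a : ℝ := (2 * n : ℝ)⁻¹ ^ 2
  have hn' : (1 : ℝ) ≤ n := by exact_mod_cast hn
  have ha : (n : ℝ) ^ 2 * a = 1 / 4 := by simp only [a]; field_simp; ring
  have ha₀ : 0 < a := by positivity
  have ha₁ : a ≤ 1 / 4 := by nlinarith [one_le_pow₀ (n := 2) hn']
  refine (abs_eval_le_mul_eval_T_of_le (by linarith) hM hP hPbnd hx).trans ?_
  gcongr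
  refine (eval_T_real_le_exp n ?_).trans (exp_le_exp.mpr ?_)
  · rw [one_le_div (by linarith)]; linarith
  · rw [div_sub_one (by linarith), ← mul_div_assoc, div_le_one (by linarith)]
    nlinarith

end Polynomial.Chebyshev

theorem abs_le_mul_sq_of_abs_sub_abs_le {q t A K : ℝ} (hA : 0 ≤ A) (hK : 0 < K)
    (hq : |q - (|t|)| ≤ A / K) (ht : (2 * K)⁻¹ ≤ |t|) : |q| ≤ (2 + 4 * A) * K * t ^ 2 := by
  have hKt : 1 ≤ 2 * K * |t| := by rwa [inv_le_iff_one_le_mul₀' (by positivity)] at ht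
  have hq' : |q| ≤ |t| + A / K := by linarith [abs_sub_abs_le_abs_sub q (|t|), abs_abs t]
  have ht' : |t| ≤ 2 * K * t ^ 2 := by nlinarith [sq_abs t, abs_nonneg t]
  have hAK : A / K ≤ 4 * A * K * t ^ 2 := by
    have h := mul_le_mul_of_nonneg_left (one_le_pow₀ (n := 2) hKt) hA
    rw [mul_pow, sq_abs] at h
    rw [div_le_iff₀ hK]; linarith
  linarith

open Chebyshev in
theorem Polynomial.abs_eval_le_mul_exp_one_mul_sq_of_even {Q : ℝ[X]} {n : ℕ} (hn : 1 ≤ n)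
    {M : ℝ} (hM : 0 < M) (hQ : Q.natDegree ≤ n) (heven : ∀ t, Q.eval (-t) = Q.eval t)
    (h0 : Q.eval 0 = 0)
    (hfar : ∀ s ∈ Set.Icc (-1 : ℝ) 1, (2 * n : ℝ)⁻¹ ≤ |s| → |Q.eval s| ≤ M * s ^ 2)
    {t : ℝ} (ht : t ∈ Set.Icc (-1 : ℝ) 1) : |Q.eval t| ≤ M * exp 1 * t ^ 2 := by
  rcases le_or_gt (2 * n : ℝ)⁻¹ |t| with hfar_t | hnear
  · calc |Q.eval t| ≤ M * 1 * t ^ 2 := by rw [mul_one]; exact hfar t ht hfar_t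
      _ ≤ M * exp 1 * t ^ 2 := by gcongr; exact one_le_exp zero_le_one
  obtain ⟨H, hHdeg, hQH⟩ := exists_eval_eq_sq_mul_eval_sq heven h0
  have hH : ∀ w ∈ Set.Icc ((2 * n : ℝ)⁻¹ ^ 2) 1, |H.eval w| ≤ M := by
    rintro w ⟨hw₁, hw₂⟩
    have hw₀ : 0 < w := lt_of_lt_of_le (by positivity) hw₁
    have hsqrt : (2 * n : ℝ)⁻¹ ≤ |√w| := by
      rw [abs_of_nonneg (sqrt_nonneg w)]; exact le_sqrt_of_sq_le hw₁
    have h := hfar (√w) ⟨by linarith [sqrt_nonneg w], sqrt_le_one.mpr hw₂⟩ hsqrt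
    rw [hQH, sq_sqrt hw₀.le, abs_mul, abs_of_pos hw₀, mul_comm M w] at h
    exact le_of_mul_le_mul_left h hw₀
  have ht2 : t ^ 2 ≤ (2 * n : ℝ)⁻¹ ^ 2 := by rw [← sq_abs]; gcongr
  have hHt := abs_eval_le_mul_exp_one hn hM (hHdeg.trans hQ) hH (sq_nonneg t) ht2
  rw [hQH, abs_mul, abs_of_nonneg (sq_nonneg t), mul_comm]
  gcongr

/-- any even polynomial `Q` of degree at most `K` with `Q(0) = 0` achieving
uniform error `≤ A/K` in approximating `|t|` on `[-1,1]` satisfies a pointwise bound: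
`| |t| − |Q(t) − |t|| | ≤ C·K·t²` on `[-1,1]`. -/
theorem pointwise_poly_bound (A : ℝ) (hA : 0 < A) :
    ∃ C : ℝ, 0 < C ∧
      ∀ K : ℕ, 1 ≤ K → ∀ Q : Polynomial ℝ, Q.natDegree ≤ K →
        (∀ t : ℝ, Q.eval (-t) = Q.eval t) → Q.eval 0 = 0 →
        (∀ t ∈ Set.Icc (-1 : ℝ) 1, abs (Q.eval t - |t|) ≤ A / K) →
        ∀ t ∈ Set.Icc (-1 : ℝ) 1,
          abs (|t| - abs (Q.eval t - |t|)) ≤ C * K * t ^ 2 := by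
  refine ⟨(2 + 4 * A) * exp 1, by positivity, ?_⟩
  intro K hK Q hQdeg heven h0 happrox t ht
  have hK₀ : (0 : ℝ) < K := by exact_mod_cast hK
  have hQt : |Q.eval t| ≤ (2 + 4 * A) * K * exp 1 * t ^ 2 :=
    abs_eval_le_mul_exp_one_mul_sq_of_even hK (by positivity) hQdeg heven h0
      (fun s hs hs' => abs_le_mul_sq_of_abs_sub_abs_le hA.le hK₀ (happrox s hs) hs') ht
  calc abs (|t| - abs (Q.eval t - |t|)) ≤ |Q.eval t| := by
        simpa [abs_sub_comm] using abs_abs_sub_abs_le_abs_sub |t| (|t| - Q.eval t)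
    _ ≤ (2 + 4 * A) * exp 1 * K * t ^ 2 := by linarith
end
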